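/- Restriction of functions gives an algebra isomorphism C[R_n]^{G_n} ≅ C[L_n]^{W_n}, where R_n = (gl_n(C))^m is the representation space of the cyclic quiver with dimension vector nδ, G_n = GL_n(C)^m acts by base change, L_n is the diagonal locus, and W_n = S_n ⋉ (Z/mZ)^n. (Chevalley restriction theorem for the cyclic quiver.) -/

import Mathlib

/-!
A base change `g` acts on the monodromy `x (m-1) * ⋯ * x 0` of a representation by conjugation
with `g 0`, and a tuple of invertible matrices can be gauged to `(1, …, 1, monodromy)`. Hence on
the dense set of invertible tuples an invariant `f` is a conjugation-invariant polynomial `P` of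
the monodromy, which is `diag (z ^ m)` on the diagonal tuple `diag z`. If `f` vanishes on diagonal
tuples then `P` vanishes on diagonal matrices with nonzero entries; since matrices with distinct
nonzero eigenvalues are diagonalisable and form a Zariski-dense set, `P = 0` and then `f = 0`.

Conversely, invariance under `z i ↦ ζ z i` forces every exponent of a `W`-invariant `q` to be
divisible by `m`, so `q (z) = r (z ^ m)` with `r` symmetric, `r = s (e₁, …, eₙ)`, and substituting
the signed coefficients of the characteristic polynomial of the monodromy into `s` gives an
invariant restricting to `q`. Restrictions are `W`-invariant because permutations are constant
gauges and `z ↦ a * z` is induced by the gauge `g i = diag (a⁻ⁱ)`.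
-/

open MvPolynomial

/-- Evaluation of a polynomial function on `R_n = (gl_n ℂ)^m` at a tuple of matrices. -/
noncomputable def evalRep (m n : ℕ) (f : MvPolynomial (Fin m × Fin n × Fin n) ℂ)
    (x : Fin m → Matrix (Fin n) (Fin n) ℂ) : ℂ :=
  eval (fun p => x p.1 p.2.1 p.2.2) f

/-- `G_n = GL_n(ℂ)^m`-invariance of a polynomial function on `R_n`,
for the cyclic base-change action `(g·x) i = (g (i+1))⁻¹ * x i * g i` (indices mod `m`). -/
def GInvRep (m n : ℕ) [NeZero m] (f : MvPolynomial (Fin m × Fin n × Fin n) ℂ) : Prop :=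
  ∀ (g : Fin m → (Matrix (Fin n) (Fin n) ℂ)ˣ) (x : Fin m → Matrix (Fin n) (Fin n) ℂ),
    evalRep m n f (fun i => (g (i + 1))⁻¹.val * x i * (g i).val) = evalRep m n f x

/-- `W_n = S_n ⋉ (ℤ/mℤ)^n`-invariance of a polynomial function on `ℂ^n ≅ L_n`. -/
def WInvDiag (m n : ℕ) (q : MvPolynomial (Fin n) ℂ) : Prop :=
  ∀ (σ : Equiv.Perm (Fin n)) (a : Fin n → ℂ), (∀ i, a i ^ m = 1) →
    ∀ z : Fin n → ℂ, eval (fun i => a i * z (σ⁻¹ i)) q = eval z q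

theorem Infinite.exists_injective_forall_ne_zero (K : Type*) [AddGroup K] [Infinite K] (n : ℕ) :
    ∃ z : Fin n → K, Function.Injective z ∧ ∀ i, z i ≠ 0 := by
  set e := Infinite.natEmbedding K
  refine ⟨fun i => e (i + 1) - e 0, fun i j h => ?_, fun i => ?_⟩
  · simpa [Fin.val_inj] using h
  · exact sub_ne_zero.mpr (e.injective.ne (Nat.succ_ne_zero _))

namespace MvPolynomial

theorem eval_bind₁ {R σ τ : Type*} [CommSemiring R] (x : τ → R) (f : σ → MvPolynomial τ R)
    (p : MvPolynomial σ R) :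
    eval x (bind₁ f p) = eval (fun i => eval x (f i)) p :=
  eval₂Hom_bind₁ _ _ _ _

theorem eq_zero_of_eval_eq_zero_of_eval_ne_zero {R σ : Type*} [CommRing R] [IsDomain R]
    [Infinite R] {p h : MvPolynomial σ R} (hh : h ≠ 0) (hp : ∀ x, eval x h ≠ 0 → eval x p = 0) :
    p = 0 := by
  have : p * h = 0 := MvPolynomial.funext fun x => by
    by_cases hx : eval x h = 0 <;> simp [hx, hp]
  exact (mul_eq_zero.mp this).resolve_right hh

theorem coeff_bind₁_C_mul_X {R σ : Type*} [CommSemiring R] [Fintype σ] (a : σ → R)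
    (q : MvPolynomial σ R) (d : σ →₀ ℕ) :
    coeff d (bind₁ (fun i => C (a i) * X i) q) = (∏ i, a i ^ d i) * coeff d q := by
  classical
  induction q using induction_on' with
  | monomial u c =>
    have hmon : bind₁ (fun i => C (a i) * X i) (monomial u c) =
        monomial u (c * ∏ i, a i ^ u i) := by
      rw [bind₁_monomial, monomial_eq, ← Finsupp.prod_pow, Finsupp.prod, Finsupp.prod]
      simp only [mul_pow, Finset.prod_mul_distrib, ← map_pow, ← map_prod, map_mul]
      ring
    rw [hmon, coeff_monomial, coeff_monomial]
    split_ifs with h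
    · rw [h, mul_comm]
    · rw [mul_zero]
  | add p q hp hq => rw [map_add, coeff_add, coeff_add, hp, hq, mul_add]

theorem exists_expand_eq {R σ : Type*} [CommSemiring R] {p : ℕ} {q : MvPolynomial σ R}
    (h : ∀ d ∈ q.support, ∀ i, p ∣ d i) : ∃ r, expand p r = q := by
  rw [← AlgHom.mem_range, q.as_sum]
  refine Subalgebra.sum_mem _ fun d hd => ?_
  obtain ⟨e, rfl⟩ : ∃ e : σ →₀ ℕ, d = p • e :=
    ⟨d.mapRange (· / p) (Nat.zero_div p), by ext i; simp [Nat.mul_div_cancel' (h d hd i)]⟩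
  exact ⟨monomial e (coeff (p • e) q), expand_monomial _ _ _⟩

section RegularDisc

variable {σ R : Type*} [Fintype σ] [DecidableEq σ] [CommRing R]

variable (σ R) in
noncomputable def regularDisc : MvPolynomial σ R :=
  ∏ p : σ × σ, if p.1 = p.2 then X p.1 else X p.1 - X p.2

theorem regularDisc_isSymmetric : (regularDisc σ R).IsSymmetric := by
  intro e
  rw [regularDisc, map_prod]
  refine Fintype.prod_equiv (e.prodCongr e) _ _ fun p => ?_
  simp [apply_ite (rename e), e.injective.eq_iff]

theorem eval_regularDisc_ne_zero_iff [IsDomain R] (z : σ → R) :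
    eval z (regularDisc σ R) ≠ 0 ↔ Function.Injective z ∧ ∀ i, z i ≠ 0 := by
  simp only [regularDisc, map_prod, Finset.prod_ne_zero_iff, Finset.mem_univ, true_implies,
    Prod.forall, apply_ite (eval z), eval_X, map_sub]
  constructor
  · intro h
    refine ⟨fun i j hij => ?_, fun i => by simpa using h i i⟩
    by_contra hne
    simpa [hne, hij] using h i j
  · rintro ⟨hinj, hz⟩ i j
    split_ifs with hij
    · exact hz i
    · exact sub_ne_zero.mpr (hinj.ne hij)

end RegularDisc

end MvPolynomial

namespace Matrix

theorem mvPolynomialX_map_eval {m n R : Type*} [CommSemiring R] (A : Matrix m n R) :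
    (mvPolynomialX m n R).map (eval fun p => A p.1 p.2) = A :=
  mvPolynomialX_map_eval₂ _ A

theorem exists_charpoly_eq_prod {K : Type*} [Field K] [IsAlgClosed K] {n : ℕ}
    (A : Matrix (Fin n) (Fin n) K) :
    ∃ z : Fin n → K, A.charpoly = ∏ i, (Polynomial.X - Polynomial.C (z i)) := by
  have hsplit : A.charpoly.Splits := IsAlgClosed.splits _
  have hlen : A.charpoly.roots.toList.length = n := by
    rw [Multiset.length_toList, Polynomial.splits_iff_card_roots.mp hsplit,
      charpoly_natDegree_eq_dim, Fintype.card_fin]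
  set z : Fin n → K := fun i => A.charpoly.roots.toList.get (Fin.cast hlen.symm i)
  have hroots : Finset.univ.val.map z = A.charpoly.roots := by
    rw [Fin.univ_val_map, ← A.charpoly.roots.coe_toList]
    exact congrArg _ (List.ext_get (by simp [hlen]) fun k _ _ => by simp [z])
  refine ⟨z, ?_⟩
  rw [hsplit.eq_prod_roots_of_monic A.charpoly_monic, ← hroots, Multiset.map_map]
  rfl

theorem exists_units_conj_eq_diagonal {K ι : Type*} [Field K] [Fintype ι] [DecidableEq ι]
    (A : Matrix ι ι K) {z : ι → K} (hz : ∀ i, A.charpoly.IsRoot (z i))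
    (hinj : Function.Injective z) :
    ∃ u : (Matrix ι ι K)ˣ, u⁻¹.val * A * u.val = diagonal z := by
  have hvec : ∀ i, ∃ v, Module.End.HasEigenvector (toLin' A) (z i) v := fun i =>
    Module.End.HasEigenvalue.exists_hasEigenvector <|
      (Module.End.hasEigenvalue_iff_isRoot_charpoly _ _).mpr (by rw [charpoly_toLin']; exact hz i)
  choose v hv using hvec
  have hunit : IsUnit (of fun j i => v i j) :=
    linearIndependent_cols_iff_isUnit.mp <|
      Module.End.eigenvectors_linearIndependent' _ z hinj v hv
  refine ⟨hunit.unit, ?_⟩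
  have hAV : A * hunit.unit = (hunit.unit : Matrix ι ι K) * diagonal z := by
    ext j i
    have := congrFun (Module.End.mem_eigenspace_iff.mp (hv i).1) j
    simp only [toLin'_apply, mulVec, dotProduct, Pi.smul_apply, smul_eq_mul] at this
    rw [mul_diagonal]
    simp [mul_apply, this, mul_comm]
  rw [mul_assoc, hAV, ← mul_assoc, Units.inv_mul, one_mul]

section CharpolyEsymm

variable {R S : Type*} [CommRing R] [CommRing S] {n : ℕ}

/-- Signed coefficients of the characteristic polynomial, indexed like `esymmAlgHom`: the entry
at `k` is `e_{k+1}` of the eigenvalues. -/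
noncomputable def charpolyEsymm (A : Matrix (Fin n) (Fin n) R) (k : Fin n) : R :=
  (-1) ^ (k + 1 : ℕ) * A.charpoly.coeff (n - (k + 1))

theorem charpolyEsymm_map (φ : R →+* S) (A : Matrix (Fin n) (Fin n) R) :
    (A.map φ).charpolyEsymm = φ ∘ A.charpolyEsymm := by
  ext k
  simp [charpolyEsymm, charpoly_map]

theorem charpolyEsymm_units_conj (u : (Matrix (Fin n) (Fin n) R)ˣ) (A : Matrix (Fin n) (Fin n) R) :
    (u⁻¹.val * A * u.val).charpolyEsymm = A.charpolyEsymm := by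
  ext k
  simp [charpolyEsymm]

theorem charpolyEsymm_of_charpoly_eq_prod {A : Matrix (Fin n) (Fin n) R} {z : Fin n → R}
    (hz : A.charpoly = ∏ i, (Polynomial.X - Polynomial.C (z i))) :
    A.charpolyEsymm = fun k : Fin n => eval z (esymm (Fin n) R (k + 1)) := by
  ext k
  have hcard : Multiset.card (Finset.univ.val.map z) = n := by simp
  have hprod : ∏ i, (Polynomial.X - Polynomial.C (z i)) =
      ((Finset.univ.val.map z).map fun t => Polynomial.X - Polynomial.C t).prod := by
    rw [Multiset.map_map]; rfl
  rw [charpolyEsymm, hz, hprod, Multiset.prod_X_sub_C_coeff _ (by omega), hcard,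
    Nat.sub_sub_self (by omega), ← mul_assoc, ← mul_pow, neg_one_mul, neg_neg, one_pow, one_mul,
    ← coe_aeval_eq_eval]
  exact (aeval_esymm_eq_multiset_esymm (Fin n) R _ z).symm

end CharpolyEsymm

end Matrix

namespace MvPolynomial

theorem eval_bind₁_charpolyEsymm {R σ : Type*} [CommRing R] {n : ℕ}
    (M : Matrix (Fin n) (Fin n) (MvPolynomial σ R)) (s : MvPolynomial (Fin n) R) (x : σ → R) :
    eval x (bind₁ M.charpolyEsymm s) = eval (M.map (eval x)).charpolyEsymm s := by
  rw [eval_bind₁, Matrix.charpolyEsymm_map]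
  rfl

theorem IsSymmetric.exists_eval_eq_eval_eigenvalues {R : Type*} [CommRing R] {n : ℕ}
    {r : MvPolynomial (Fin n) R} (hr : r.IsSymmetric) :
    ∃ Δ : MvPolynomial (Fin n × Fin n) R, ∀ (A : Matrix (Fin n) (Fin n) R) (z : Fin n → R),
      A.charpoly = ∏ i, (Polynomial.X - Polynomial.C (z i)) →
      eval (fun p => A p.1 p.2) Δ = eval z r := by
  obtain ⟨s, hs⟩ := (esymmAlgHom_fin_bijective R n).2 ⟨r, hr⟩
  replace hs : aeval (fun i : Fin n => esymm (Fin n) R (i + 1)) s = r := by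
    simpa [esymmAlgHom_apply] using congrArg Subtype.val hs
  refine ⟨bind₁ (Matrix.mvPolynomialX (Fin n) (Fin n) R).charpolyEsymm s, fun A z hz => ?_⟩
  rw [eval_bind₁_charpolyEsymm, Matrix.mvPolynomialX_map_eval,
    Matrix.charpolyEsymm_of_charpoly_eq_prod hz, ← hs, aeval_eq_bind₁, eval_bind₁]

theorem eq_zero_of_conj_invariant {K : Type*} [Field K] [IsAlgClosed K] {n : ℕ}
    {Q : MvPolynomial (Fin n × Fin n) K}
    (hconj : ∀ (u : (Matrix (Fin n) (Fin n) K)ˣ) (A : Matrix (Fin n) (Fin n) K),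
      eval (fun p => (u⁻¹.val * A * u.val) p.1 p.2) Q = eval (fun p => A p.1 p.2) Q)
    (hdiag : ∀ z : Fin n → K, Function.Injective z → (∀ i, z i ≠ 0) →
      eval (fun p => Matrix.diagonal z p.1 p.2) Q = 0) :
    Q = 0 := by
  obtain ⟨Δ, hΔ⟩ :=
    (regularDisc_isSymmetric (σ := Fin n) (R := K)).exists_eval_eq_eval_eigenvalues
  refine eq_zero_of_eval_eq_zero_of_eval_ne_zero (h := Δ) (fun hΔ0 => ?_) fun x hx => ?_
  · obtain ⟨z, hinj, hz0⟩ := Infinite.exists_injective_forall_ne_zero K n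
    have := (eval_regularDisc_ne_zero_iff z).mpr ⟨hinj, hz0⟩
    rw [← hΔ _ z (Matrix.charpoly_diagonal z), hΔ0, map_zero] at this
    exact this rfl
  · set A : Matrix (Fin n) (Fin n) K := Matrix.of fun i j => x (i, j)
    obtain ⟨z, hz⟩ := A.exists_charpoly_eq_prod
    obtain ⟨hinj, hz0⟩ := (eval_regularDisc_ne_zero_iff z).mp (hΔ A z hz ▸ hx)
    have hroot : ∀ i, A.charpoly.IsRoot (z i) := fun i => by
      rw [hz, Polynomial.IsRoot, Polynomial.eval_prod]
      exact Finset.prod_eq_zero (Finset.mem_univ i) (by simp)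
    obtain ⟨u, hu⟩ := A.exists_units_conj_eq_diagonal hroot hinj
    change eval (fun p => A p.1 p.2) Q = 0
    rw [← hconj u, hu]
    exact hdiag z hinj hz0

end MvPolynomial

section PathProd

open Fin.NatCast

variable {M : Type*} [Monoid M] {m : ℕ} [NeZero m]

/-- `pathProd x k = x (k - 1) * ⋯ * x 1 * x 0`, indices taken mod `m`; `pathProd x m` is the
monodromy of a representation `x` of the cyclic quiver. -/
def pathProd (x : Fin m → M) : ℕ → M
  | 0 => 1
  | k + 1 => x (k : Fin m) * pathProd x k

theorem pathProd_map {N : Type*} [Monoid N] (φ : M →* N) (x : Fin m → M) (k : ℕ) :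
    pathProd (fun i => φ (x i)) k = φ (pathProd x k) := by
  induction k with
  | zero => simp [pathProd]
  | succ k ih => simp [pathProd, ih]

theorem pathProd_const (a : M) (k : ℕ) : pathProd (fun _ : Fin m => a) k = a ^ k := by
  induction k with
  | zero => simp [pathProd]
  | succ k ih => rw [pathProd, ih, pow_succ']

theorem pathProd_gauge (g : Fin m → Mˣ) (x : Fin m → M) (k : ℕ) :
    pathProd (fun i => (g (i + 1))⁻¹.val * x i * (g i).val) k =
      (g (k : Fin m))⁻¹.val * pathProd x k * (g 0).val := by
  induction k with
  | zero => simp [pathProd]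
  | succ k ih =>
    rw [pathProd, ih, pathProd, Nat.cast_succ]
    simp only [mul_assoc, Units.mul_inv_cancel_left]

theorem exists_gauge_eq_mulSingle {G : Type*} [Group G] (u : Fin m → G) :
    ∃ g : Fin m → G, ∀ i,
      (g (i + 1))⁻¹ * u i * g i = (Pi.mulSingle (-1) (pathProd u m) : Fin m → G) i := by
  refine ⟨fun i => pathProd u i, fun i => ?_⟩
  have hstep : u i * pathProd u i = pathProd u (i + 1) := by
    rw [pathProd, Fin.cast_val_eq_self]
  have hcast : i + 1 = ((i + 1 : ℕ) : Fin m) := by rw [Nat.cast_succ, Fin.cast_val_eq_self]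
  have hle : (i : ℕ) + 1 ≤ m := i.isLt
  rcases hle.lt_or_eq with hlt | heq
  · have hne : i ≠ -1 := fun h => by
      have := congrArg Fin.val (hcast.symm.trans (eq_neg_iff_add_eq_zero.mp h))
      rw [Fin.val_cast_of_lt hlt] at this
      exact Nat.succ_ne_zero _ this
    dsimp only
    rw [Pi.mulSingle_eq_of_ne hne, hcast, Fin.val_cast_of_lt hlt, ← hstep]
    group
  · rw [heq, Fin.natCast_self] at hcast
    dsimp only
    rw [hcast, Fin.val_zero, pathProd, inv_one, one_mul, hstep, heq,
      eq_neg_of_add_eq_zero_left hcast, Pi.mulSingle_eq_same]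

end PathProd

section CyclicQuiver

variable {m n : ℕ} [NeZero m]

omit [NeZero m] in
theorem evalRep_sub (f f' : MvPolynomial (Fin m × Fin n × Fin n) ℂ)
    (x : Fin m → Matrix (Fin n) (Fin n) ℂ) :
    evalRep m n (f - f') x = evalRep m n f x - evalRep m n f' x :=
  map_sub _ _ _

theorem GInvRep.sub {f f' : MvPolynomial (Fin m × Fin n × Fin n) ℂ} (hf : GInvRep m n f)
    (hf' : GInvRep m n f') : GInvRep m n (f - f') := fun g x => by
  rw [evalRep_sub, evalRep_sub, hf, hf']

variable {f : MvPolynomial (Fin m × Fin n × Fin n) ℂ}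

theorem GInvRep.evalRep_const_conj (hf : GInvRep m n f) (u : (Matrix (Fin n) (Fin n) ℂ)ˣ)
    (x : Fin m → Matrix (Fin n) (Fin n) ℂ) :
    evalRep m n f (fun i => u⁻¹.val * x i * u.val) = evalRep m n f x :=
  hf (fun _ => u) x

theorem GInvRep.evalRep_diagonal_comp_perm (hf : GInvRep m n f) (σ : Equiv.Perm (Fin n))
    (z : Fin n → ℂ) :
    evalRep m n f (fun _ => Matrix.diagonal (z ∘ σ)) =
      evalRep m n f (fun _ => Matrix.diagonal z) := by
  have hconj : ((Matrix.permMatrixHom (R := ℂ)).toHomUnits σ)⁻¹.val * Matrix.diagonal z *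
      ((Matrix.permMatrixHom (R := ℂ)).toHomUnits σ).val = Matrix.diagonal (z ∘ σ) := by
    rw [← map_inv, MonoidHom.coe_toHomUnits, MonoidHom.coe_toHomUnits, Matrix.permMatrixHom_apply,
      Matrix.permMatrixHom_apply, inv_inv, Equiv.Perm.permMatrix, Equiv.Perm.permMatrix,
      PEquiv.toMatrix_toPEquiv_mul, PEquiv.mul_toMatrix_toPEquiv, Matrix.submatrix_submatrix]
    exact Matrix.submatrix_diagonal_equiv z σ
  rw [← hconj, hf.evalRep_const_conj]

theorem GInvRep.evalRep_diagonal_mul (hf : GInvRep m n f) {a : Fin n → ℂ}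
    (ha : ∀ i, a i ^ m = 1) (z : Fin n → ℂ) :
    evalRep m n f (fun _ => Matrix.diagonal fun i => a i * z i) =
      evalRep m n f (fun _ => Matrix.diagonal z) := by
  set b : (Fin n → ℂ)ˣ := Units.ofPowEqOne a m (funext ha) (NeZero.ne m)
  set D := Matrix.diagonalRingHom (Fin n) ℂ
  -- the gauge `g i = diag(a⁻ⁱ)` is well defined on `ℤ/m` because `a ^ m = 1`
  have hgauge : ∀ i : Fin m, (Units.map D.toMonoidHom (b ^ ((i + 1 : Fin m) : ℕ))⁻¹)⁻¹.val *
      Matrix.diagonal z * (Units.map D.toMonoidHom (b ^ (i : ℕ))⁻¹).val =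
      Matrix.diagonal fun i => a i * z i := fun i => by
    have hval : (↑(b ^ ((i + 1 : Fin m) : ℕ)) : Fin n → ℂ) * ↑(b ^ (i : ℕ))⁻¹ = a := by
      rw [← Units.val_mul, Fin.val_add, Fin.val_one', Nat.add_mod_mod,
        ← pow_eq_pow_mod _ (Units.ext (funext ha)), pow_succ', mul_inv_cancel_right]
      rfl
    simp only [map_inv, inv_inv, Units.coe_map]
    change D _ * D z * D _ = D (a * z)
    rw [← map_mul, ← map_mul, mul_right_comm]
    exact congrArg (fun c => D (c * z)) hval
  rw [← hf (fun i => Units.map D.toMonoidHom (b ^ (i : ℕ))⁻¹) (fun _ => Matrix.diagonal z)]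
  exact congrArg _ (_root_.funext fun i => (hgauge i).symm)

theorem GInvRep.evalRep_of_isUnit (hf : GInvRep m n f) {x : Fin m → Matrix (Fin n) (Fin n) ℂ}
    (hx : ∀ i, IsUnit (x i)) :
    evalRep m n f x = evalRep m n f (Pi.mulSingle (-1) (pathProd x m)) := by
  choose u hu using hx
  obtain rfl : x = fun i => (u i).val := funext fun i => (hu i).symm
  obtain ⟨g, hg⟩ := exists_gauge_eq_mulSingle u
  rw [← hf g, show pathProd (fun i => (u i).val) m = (pathProd u m).val from
    pathProd_map (Units.coeHom _) u m]
  congr 1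
  funext i
  rw [← Units.val_mul, ← Units.val_mul, hg]
  by_cases hi : i = -1 <;> simp [hi]

theorem GInvRep.evalRep_mulSingle_conj (hf : GInvRep m n f) (u : (Matrix (Fin n) (Fin n) ℂ)ˣ)
    (A : Matrix (Fin n) (Fin n) ℂ) :
    evalRep m n f (Pi.mulSingle (-1) (u⁻¹.val * A * u.val)) =
      evalRep m n f (Pi.mulSingle (-1) A) := by
  rw [← hf.evalRep_const_conj u (Pi.mulSingle (-1) A)]
  congr 1
  funext i
  by_cases hi : i = -1 <;> simp [hi]

variable (m n) in
/-- The polynomial `A ↦ f (1, …, 1, A)`. -/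
noncomputable def restrictLastArrow (f : MvPolynomial (Fin m × Fin n × Fin n) ℂ) :
    MvPolynomial (Fin n × Fin n) ℂ :=
  bind₁ (fun p => (Pi.mulSingle (-1) (Matrix.mvPolynomialX (Fin n) (Fin n) ℂ) :
    Fin m → Matrix _ _ _) p.1 p.2.1 p.2.2) f

theorem eval_restrictLastArrow (f : MvPolynomial (Fin m × Fin n × Fin n) ℂ)
    (A : Matrix (Fin n) (Fin n) ℂ) :
    eval (fun p => A p.1 p.2) (restrictLastArrow m n f) = evalRep m n f (Pi.mulSingle (-1) A) := by
  rw [restrictLastArrow, eval_bind₁, evalRep]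
  refine congrArg (fun y => eval y f) (_root_.funext fun p => ?_)
  by_cases hp : p.1 = -1
  · simp [hp, Matrix.mvPolynomialX]
  · simp [hp, Matrix.one_apply, apply_ite (eval _)]

variable (m n) in
noncomputable def genericTuple (i : Fin m) :
    Matrix (Fin n) (Fin n) (MvPolynomial (Fin m × Fin n × Fin n) ℂ) :=
  Matrix.of fun j k => X (i, j, k)

omit [NeZero m] in
theorem genericTuple_map_eval (x : Fin m → Matrix (Fin n) (Fin n) ℂ) (i : Fin m) :
    (genericTuple m n i).map (eval fun p => x p.1 p.2.1 p.2.2) = x i := by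
  ext j k
  simp [genericTuple]

omit [NeZero m] in
theorem eval_det_genericTuple (x : Fin m → Matrix (Fin n) (Fin n) ℂ) (i : Fin m) :
    eval (fun p => x p.1 p.2.1 p.2.2) (genericTuple m n i).det = (x i).det := by
  rw [RingHom.map_det, RingHom.mapMatrix_apply, genericTuple_map_eval]

theorem GInvRep.eq_zero_of_evalRep_diagonal (hf : GInvRep m n f)
    (hdiag : ∀ z, evalRep m n f (fun _ => Matrix.diagonal z) = 0) : f = 0 := by
  have hslice : restrictLastArrow m n f = 0 := by
    refine eq_zero_of_conj_invariant (fun u A => ?_) (fun v _ hv => ?_)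
    · rw [eval_restrictLastArrow, eval_restrictLastArrow, hf.evalRep_mulSingle_conj]
    · choose w hw using fun i => IsAlgClosed.exists_pow_nat_eq (v i) (NeZero.pos m)
      have hw0 : ∀ i, w i ≠ 0 := fun i h => hv i (by rw [← hw i, h, zero_pow (NeZero.ne m)])
      have hunit : IsUnit (Matrix.diagonal w) :=
        Matrix.isUnit_diagonal.mpr (Pi.isUnit_iff.mpr fun i => (hw0 i).isUnit)
      have hvw : v = w ^ m := _root_.funext fun i => (hw i).symm
      rw [eval_restrictLastArrow, hvw, ← Matrix.diagonal_pow, ← pathProd_const (m := m),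
        ← hf.evalRep_of_isUnit fun _ => hunit, hdiag]
  refine eq_zero_of_eval_eq_zero_of_eval_ne_zero (h := ∏ i, (genericTuple m n i).det)
    (fun h0 => ?_) fun y hy => ?_
  · have hone : eval (fun p : Fin m × Fin n × Fin n => (1 : Matrix (Fin n) (Fin n) ℂ) p.2.1 p.2.2)
        (∏ i, (genericTuple m n i).det) = 1 := by
      simp only [map_prod, eval_det_genericTuple (fun _ => 1), Matrix.det_one,
        Finset.prod_const_one]
    rw [h0, map_zero] at hone
    exact zero_ne_one hone
  · set x : Fin m → Matrix (Fin n) (Fin n) ℂ := fun i => Matrix.of fun j k => y (i, j, k)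
    have hx : ∀ i, IsUnit (x i) := fun i => by
      rw [Matrix.isUnit_iff_isUnit_det, isUnit_iff_ne_zero, ← eval_det_genericTuple x]
      rw [map_prod] at hy
      exact Finset.prod_ne_zero_iff.mp hy i (Finset.mem_univ i)
    change evalRep m n f x = 0
    rw [hf.evalRep_of_isUnit hx, ← eval_restrictLastArrow, hslice, map_zero]

theorem evalRep_bind₁_charpolyEsymm (s : MvPolynomial (Fin n) ℂ)
    (x : Fin m → Matrix (Fin n) (Fin n) ℂ) :
    evalRep m n (bind₁ (pathProd (genericTuple m n) m).charpolyEsymm s) x =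
      eval (pathProd x m).charpolyEsymm s := by
  have hmap : (pathProd (genericTuple m n) m).map (eval fun p => x p.1 p.2.1 p.2.2) =
      pathProd x m := by
    have := pathProd_map ((eval fun p : Fin m × Fin n × Fin n => x p.1 p.2.1 p.2.2).mapMatrix
      (m := Fin n)).toMonoidHom (genericTuple m n) m
    simpa [genericTuple_map_eval] using this.symm
  rw [evalRep, eval_bind₁_charpolyEsymm, hmap]

end CyclicQuiver

section WInvDiag

variable {m n : ℕ} {q : MvPolynomial (Fin n) ℂ}

theorem WInvDiag.isSymmetric (hq : WInvDiag m n q) : q.IsSymmetric := fun σ =>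
  MvPolynomial.funext fun z => by
    simpa [eval_rename, Function.comp_def] using hq σ⁻¹ 1 (fun _ => one_pow m) z

theorem WInvDiag.dvd_of_mem_support [NeZero m] (hq : WInvDiag m n q) {d : Fin n →₀ ℕ}
    (hd : d ∈ q.support) (i : Fin n) : m ∣ d i := by
  set ζ := Complex.exp (2 * Real.pi * Complex.I / m)
  have hζ : IsPrimitiveRoot ζ m := Complex.isPrimitiveRoot_exp m (NeZero.ne m)
  set a : Fin n → ℂ := Pi.mulSingle i ζ
  have ha : ∀ j, a j ^ m = 1 := fun j => by
    by_cases hj : j = i <;> simp [a, hj, hζ.pow_eq_one]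
  have hscale : bind₁ (fun j => C (a j) * X j) q = q := MvPolynomial.funext fun z => by
    simpa [eval_bind₁] using hq 1 a ha z
  have hcoeff := coeff_bind₁_C_mul_X a q d
  rw [hscale, eq_comm, mul_eq_right₀ (mem_support_iff.mp hd)] at hcoeff
  rw [← hζ.pow_eq_one_iff_dvd]
  simpa [a, Pi.mulSingle_apply, Finset.prod_ite_eq'] using hcoeff

theorem WInvDiag.exists_expand_eq [NeZero m] (hq : WInvDiag m n q) :
    ∃ r, expand m r = q :=
  MvPolynomial.exists_expand_eq fun _ hd i => hq.dvd_of_mem_support hd i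

theorem WInvDiag.isSymmetric_of_expand_eq [NeZero m] (hq : WInvDiag m n q)
    {r : MvPolynomial (Fin n) ℂ} (hr : expand m r = q) : r.IsSymmetric := fun σ =>
  expand_injective (NeZero.pos m) <| by rw [← rename_expand, hr, hq.isSymmetric σ]

theorem WInvDiag.exists_GInvRep [NeZero m] (hq : WInvDiag m n q) :
    ∃ f, GInvRep m n f ∧ ∀ z, evalRep m n f (fun _ => Matrix.diagonal z) = eval z q := by
  obtain ⟨r, rfl⟩ := hq.exists_expand_eq
  obtain ⟨s, hs⟩ := (esymmAlgHom_fin_bijective ℂ n).2 ⟨r, hq.isSymmetric_of_expand_eq rfl⟩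
  replace hs : aeval (fun i : Fin n => esymm (Fin n) ℂ (i + 1)) s = r := by
    simpa [esymmAlgHom_apply] using congrArg Subtype.val hs
  refine ⟨bind₁ (pathProd (genericTuple m n) m).charpolyEsymm s, fun g x => ?_, fun z => ?_⟩
  · rw [evalRep_bind₁_charpolyEsymm, evalRep_bind₁_charpolyEsymm, pathProd_gauge,
      Fin.natCast_self, Matrix.charpolyEsymm_units_conj]
  · rw [evalRep_bind₁_charpolyEsymm, pathProd_const, Matrix.diagonal_pow,
      Matrix.charpolyEsymm_of_charpoly_eq_prod (Matrix.charpoly_diagonal _), ← hs, eval_expand,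
      aeval_eq_bind₁, eval_bind₁]

end WInvDiag

/-- **Chevalley restriction for the cyclic quiver.**  Restriction of
functions from `R_n = (gl_n ℂ)^m` to the diagonal locus `L_n ≅ ℂ^n` is a bijection
between `G_n`-invariant polynomial functions and `W_n`-invariant polynomial functions:
it is well defined (restrictions of invariants are `W_n`-invariant), surjective, and
injective. -/
theorem stmt_5 (m n : ℕ) [NeZero m] :
    (∀ f : MvPolynomial (Fin m × Fin n × Fin n) ℂ, GInvRep m n f →
      ∀ (σ : Equiv.Perm (Fin n)) (a : Fin n → ℂ), (∀ i, a i ^ m = 1) →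
        ∀ z : Fin n → ℂ,
          evalRep m n f (fun _ => Matrix.diagonal (fun i => a i * z (σ⁻¹ i))) =
            evalRep m n f (fun _ => Matrix.diagonal z)) ∧
    (∀ q : MvPolynomial (Fin n) ℂ, WInvDiag m n q →
      ∃ f : MvPolynomial (Fin m × Fin n × Fin n) ℂ, GInvRep m n f ∧
        ∀ z : Fin n → ℂ, evalRep m n f (fun _ => Matrix.diagonal z) = eval z q) ∧
    (∀ f f' : MvPolynomial (Fin m × Fin n × Fin n) ℂ, GInvRep m n f → GInvRep m n f' →
      (∀ z : Fin n → ℂ,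
        evalRep m n f (fun _ => Matrix.diagonal z) =
          evalRep m n f' (fun _ => Matrix.diagonal z)) →
      ∀ x : Fin m → Matrix (Fin n) (Fin n) ℂ, evalRep m n f x = evalRep m n f' x) := by
  refine ⟨fun f hf σ a ha z => ?_, fun q hq => hq.exists_GInvRep, fun f f' hf hf' hdiag x => ?_⟩
  · exact (hf.evalRep_diagonal_mul ha (z ∘ ⇑σ⁻¹)).trans (hf.evalRep_diagonal_comp_perm σ⁻¹ z)
  · have hzero := (hf.sub hf').eq_zero_of_evalRep_diagonal fun z => by
      rw [evalRep_sub, hdiag, sub_self]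
    rw [← sub_eq_zero, ← evalRep_sub, hzero]
    exact map_zero _
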